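/- Under the explicitly controlled product equation and assuming extensionality of q, if l (q (eps n q)) ≥ n then l (q (first n values of eps n q padded with zeros)) ≥ n. Equivalently: if l (q (truncation of α at n padded with zeros)) < n where α = eps n q, then α equals that zero-padded truncation, and hence l (q α) < n. -/
import Mathlib


/-- Prepend an element to an infinite sequence. -/
def seqCons {X : Type*} (x : X) (α : ℕ → X) : ℕ → X
  | 0 => x
  | n + 1 => α n

/-- Overwrite the initial segment of an infinite sequence with a finite list. -/
def listApp {X : Type*} (s : List X) (α : ℕ → X) : ℕ → X :=
  fun i => if h : i < s.length then s.get ⟨i, h⟩ else α (i - s.length)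

/-- The list of the first `n` values of an infinite sequence. -/
def firstN {X : Type*} (α : ℕ → X) (n : ℕ) : List X := (List.range n).map α

/-- The first `n` values of `α` followed by `z`'s. -/
def pad {X : Type*} (z : X) (α : ℕ → X) (n : ℕ) : ℕ → X :=
  fun i => if i < n then α i else z

lemma seqCons_const {X : Type*} (z : X) : seqCons z (fun _ => z) = fun _ => z :=
  funext fun i => by cases i <;> rfl

lemma listApp_nil {X : Type*} (β : ℕ → X) : listApp ([] : List X) β = β :=
  funext fun i => by simp [listApp]

lemma firstN_length {X : Type*} (α : ℕ → X) (n : ℕ) : (firstN α n).length = n := by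
  simp [firstN]

lemma firstN_succ {X : Type*} (α : ℕ → X) (n : ℕ) :
    firstN α (n + 1) = firstN α n ++ [α n] := by
  simp [firstN, List.range_succ]

lemma listApp_snoc {X : Type*} (s : List X) (x : X) (β : ℕ → X) :
    listApp (s ++ [x]) β = listApp s (seqCons x β) := by
  funext i
  unfold listApp
  by_cases h : i < s.length
  · have h' : i < (s ++ [x]).length := by simp; omega
    rw [dif_pos h, dif_pos h']
    simp only [List.get_eq_getElem]
    exact List.getElem_append_left h
  · by_cases h2 : i = s.length
    · subst h2
      have h' : s.length < (s ++ [x]).length := by simp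
      rw [dif_pos h', dif_neg h]
      simp only [List.get_eq_getElem]
      rw [List.getElem_append_right (le_refl _)]
      simp [seqCons]
    · have hge : s.length < i := by omega
      have h' : ¬ i < (s ++ [x]).length := by simp; omega
      rw [dif_neg h, dif_neg h']
      have e : i - s.length = (i - s.length - 1) + 1 := by omega
      rw [e]
      show β (i - (s ++ [x]).length) = β (i - s.length - 1)
      congr 1
      simp
      omega

lemma pad_eq_listApp {X : Type*} (z : X) (α : ℕ → X) (n : ℕ) :
    pad z α n = listApp (firstN α n) (fun _ => z) := by
  funext i
  by_cases h : i < n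
  · have h' : i < (firstN α n).length := by rw [firstN_length]; exact h
    simp [pad, listApp, h, h', firstN]
  · have h' : ¬ i < (firstN α n).length := by rw [firstN_length]; exact h
    simp [pad, listApp, h, h']

lemma shift {X R : Type*} (z : X) (l : R → ℕ) (ε : ℕ → (X → R) → X)
    (eps : ℕ → ((ℕ → X) → R) → (ℕ → X))
    (heps : ∀ m (q' : (ℕ → X) → R),
      eps m q' =
        if l (q' (fun _ => z)) < m then (fun _ => z)
        else
          let c := ε m (fun x => q' (seqCons x (eps (m + 1) (fun α => q' (seqCons x α)))))
          seqCons c (eps (m + 1) (fun α => q' (seqCons c α))))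
    (q : (ℕ → X) → R) (n : ℕ) : ∀ k : ℕ,
    eps n q = listApp (firstN (eps n q) k)
      (eps (n + k) (fun β => q (listApp (firstN (eps n q) k) β))) := by
  intro k
  induction k with
  | zero =>
      have h1 : (fun β => q (listApp (firstN (eps n q) 0) β)) = q := by
        funext β; rw [show firstN (eps n q) 0 = [] from rfl, listApp_nil]
      rw [h1, show n + 0 = n from rfl, show firstN (eps n q) 0 = [] from rfl, listApp_nil]
  | succ k ih =>
      set α := eps n q with hα
      set s := firstN α k with hs
      set qs : (ℕ → X) → R := fun β => q (listApp s β) with hqs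
      have hslen : s.length = k := firstN_length α k
      -- the key claim
      have key : eps (n + k) qs =
          seqCons (α k) (eps (n + k + 1) (fun β => qs (seqCons (α k) β))) := by
        by_cases h : l (qs (fun _ => z)) < n + k
        · have e1 : eps (n + k) qs = fun _ => z := by rw [heps (n + k) qs, if_pos h]
          have hαk : α k = z := by
            conv_lhs => rw [ih]
            rw [e1]
            simp [listApp, hslen]
          rw [hαk]
          have e2 : eps (n + k + 1) (fun β => qs (seqCons z β)) = fun _ => z := by
            rw [heps (n + k + 1) (fun β => qs (seqCons z β)), if_pos]
            rw [seqCons_const]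
            omega
          rw [e1, e2, seqCons_const]
        · have e1 := heps (n + k) qs
          rw [if_neg h] at e1
          set c := ε (n + k)
            (fun x => qs (seqCons x (eps (n + k + 1) (fun β => qs (seqCons x β))))) with hc
          have hαk : α k = c := by
            conv_lhs => rw [ih]
            rw [e1]
            simp [listApp, hslen]
            rfl
          rw [hαk]; exact e1
      have harg : (fun β => qs (seqCons (α k) β)) =
          (fun β => q (listApp (firstN α (k + 1)) β)) := by
        funext β
        rw [hqs]
        rw [firstN_succ, listApp_snoc]
      calc α = listApp s (eps (n + k) qs) := ih
        _ = listApp s (seqCons (α k)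
              (eps (n + k + 1) (fun β => qs (seqCons (α k) β)))) := by rw [key]
        _ = listApp (s ++ [α k])
              (eps (n + k + 1) (fun β => qs (seqCons (α k) β))) := (listApp_snoc _ _ _).symm
        _ = listApp (firstN α (k + 1))
              (eps (n + (k + 1)) (fun β => q (listApp (firstN α (k + 1)) β))) := by
            rw [harg, firstN_succ, ← hs, show n + (k + 1) = n + k + 1 from rfl]

theorem stmt19 {X R : Type*} (z : X) (l : R → ℕ) (ε : ℕ → (X → R) → X)
    (eps : ℕ → ((ℕ → X) → R) → (ℕ → X))
    (heps : ∀ m (q' : (ℕ → X) → R),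
      eps m q' =
        if l (q' (fun _ => z)) < m then (fun _ => z)
        else
          let c := ε m (fun x => q' (seqCons x (eps (m + 1) (fun α => q' (seqCons x α)))))
          seqCons c (eps (m + 1) (fun α => q' (seqCons c α))))
    (q : (ℕ → X) → R) (n : ℕ) :
    (n ≤ l (q (eps n q)) → n ≤ l (q (pad z (eps n q) n))) ∧
    (l (q (pad z (eps n q) n)) < n →
      eps n q = pad z (eps n q) n ∧ l (q (eps n q)) < n) := by
  set α := eps n q with hα
  have hpad : pad z α n = listApp (firstN α n) (fun _ => z) := pad_eq_listApp z α n
  have hmain : l (q (pad z α n)) < n → α = pad z α n := by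
    intro h
    have hsh := shift z l ε eps heps q n n
    set qs : (ℕ → X) → R := fun β => q (listApp (firstN α n) β) with hqs
    have hz : qs (fun _ => z) = q (pad z α n) := by
      show q (listApp (firstN α n) fun _ => z) = q (pad z α n)
      rw [hpad]
    have e1 : eps (n + n) qs = fun _ => z := by
      rw [heps (n + n) qs, if_pos]
      rw [hz]; omega
    rw [hpad]
    calc α = listApp (firstN α n) (eps (n + n) qs) := hsh
      _ = listApp (firstN α n) (fun _ => z) := by rw [e1]
  constructor
  · intro h
    by_contra hc
    push_neg at hc
    have := hmain hc
    rw [← this] at hc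
    omega
  · intro h
    have h1 := hmain h
    exact ⟨h1, by rw [h1]; exact h⟩
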